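/- Let A = ⊕_{i≥0} A_i be a finite-dimensional positively graded algebra over a field with A_0 semisimple and A generated in degree 1, and M a finite-dimensional graded A-module with simple socle concentrated in degree k. Then soc^i M = M_{≥ k−i+1} for every i ≥ 0, where soc^i is the socle series of M as an A-module. -/

import Mathlib

/-!
Write `N_n` for the annihilator of `A_{≥ n}`. As `A` is finite-dimensional, `A_{≥ 1}` is
nilpotent, so it kills every simple module; conversely a module killed by `A_{≥ 1}` is a module
over the semisimple ring `A_0`, hence semisimple. So the socle of every module is `N_1`, and
generation in degree one turns the socle series into `soc^i M = N_i`. Finally, a nonzero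
homogeneous element of degree `m` killed by `A_{≥ i}` has a nonzero multiple in
`N_1 = soc M ⊆ M_c` of degree in `[m, m + i)`; this forces `M_{> c} = 0` and `N_i = M_{≥ c-i+1}`.
-/

section LoewySeries

variable (R : Type*) [Ring R] (M : Type*) [AddCommGroup M] [Module R M]

/-- The socle of a module: the sum of all its simple submodules. -/
noncomputable def socM : Submodule R M :=
  sSup {m : Submodule R M | IsSimpleModule R ↥m}

/-- The radical of a module: the intersection of all its maximal (proper) submodules. -/
noncomputable def radM : Submodule R M :=
  sInf {m : Submodule R M | IsCoatom m}

variable {R M}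

/-- Given `N ≤ M`, the preimage in `M` of the socle of `M/N`. -/
noncomputable def socStep (N : Submodule R M) : Submodule R M :=
  Submodule.comap N.mkQ (socM R (M ⧸ N))

/-- Given `N ≤ M`, the radical of `N` viewed as a submodule of `M`. -/
noncomputable def radOf (N : Submodule R M) : Submodule R M :=
  (radM R ↥N).map N.subtype

variable (R M)

/-- The socle series: `soc⁰ M = 0`, `soc^{i+1} M` is the preimage in `M` of
`soc (M / soc^i M)`. -/
noncomputable def socSeries : ℕ → Submodule R M
  | 0 => ⊥
  | n + 1 => socStep (socSeries n)

/-- The radical series: `rad⁰ M = M`, `rad^{i+1} M = rad (rad^i M)`. -/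
noncomputable def radSeries : ℕ → Submodule R M
  | 0 => ⊤
  | n + 1 => radOf (radSeries n)

/-- The Loewy length: the least `n` with `soc^n M = M`. -/
noncomputable def loewyLength : ℕ := sInf {n | socSeries R M n = ⊤}

end LoewySeries

section Graded

variable {k A : Type*} [Field k] [Ring A] [Algebra k A]

/-- `A_{>0}·L = 0` holds degreewise: every homogeneous element of positive degree
annihilates `L`. -/
def PosPartKills (𝒜 : ℤ → Submodule k A) (L : Type*) [AddCommGroup L] [Module A L] : Prop :=
  ∀ i : ℤ, 0 < i → ∀ a ∈ 𝒜 i, ∀ x : L, a • x = 0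

end Graded

open DirectSum

section PositivelyGraded

variable {k A : Type*} [CommSemiring k] [Semiring A] [Algebra k A] (𝒜 : ℤ → Submodule k A)
  [GradedAlgebra 𝒜]

theorem smul_mem_of_forall_homogeneous_smul_mem (hpos : ∀ i : ℤ, i < 0 → 𝒜 i = ⊥)
    {Q : Type*} [AddCommMonoid Q] [Module A Q] (P : AddSubmonoid Q) {x : Q}
    (h : ∀ t : ℤ, 0 ≤ t → ∀ b ∈ 𝒜 t, b • x ∈ P) (a : A) : a • x ∈ P := by
  classical
  rw [← sum_support_decompose 𝒜 a, Finset.sum_smul]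
  refine P.sum_mem fun t _ => ?_
  rcases lt_or_ge t 0 with ht | ht
  · have hat : (decompose 𝒜 a t : A) ∈ (⊥ : Submodule k A) := hpos t ht ▸ (decompose 𝒜 a t).2
    rw [(Submodule.mem_bot k).1 hat, zero_smul]
    exact P.zero_mem
  · exact h t ht _ (decompose 𝒜 a t).2

theorem graded_succ_le_mul_one (hgen : ∀ i : ℤ, 0 ≤ i → 𝒜 (i + 1) = 𝒜 1 * 𝒜 i)
    {t : ℤ} (ht : 0 ≤ t) : 𝒜 (t + 1) ≤ 𝒜 t * 𝒜 1 := by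
  induction t, ht using Int.leInduction with
  | base =>
    intro x hx
    rw [zero_add] at hx
    simpa using Submodule.mul_mem_mul (SetLike.one_mem_graded 𝒜) hx
  | succ t ht ih =>
    calc 𝒜 (t + 1 + 1) = 𝒜 1 * 𝒜 (t + 1) := hgen _ (by omega)
      _ ≤ 𝒜 1 * (𝒜 t * 𝒜 1) := by gcongr
      _ = 𝒜 (t + 1) * 𝒜 1 := by rw [← mul_assoc, hgen t ht]

end PositivelyGraded

section Annihilator

variable {k A : Type*} [Field k] [Ring A] [Algebra k A] (𝒜 : ℤ → Submodule k A) [GradedAlgebra 𝒜]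
  (hpos : ∀ i : ℤ, i < 0 → 𝒜 i = ⊥) {Q : Type*} [AddCommGroup Q] [Module A Q]

/-- The annihilator of `A_{≥ n}`; it is an `A`-submodule because the grading is nonnegative. -/
def annihilatorGE (n : ℤ) : Submodule A Q where
  carrier := {x | ∀ j : ℤ, n ≤ j → ∀ a ∈ 𝒜 j, a • x = 0}
  zero_mem' _ _ a _ := smul_zero a
  add_mem' hx hy j hj a ha := by rw [smul_add, hx j hj a ha, hy j hj a ha, add_zero]
  smul_mem' b x hx j hj a ha := by
    refine smul_mem_of_forall_homogeneous_smul_mem 𝒜 hpos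
      (AddMonoidHom.mker (DistribSMul.toAddMonoidHom Q a)) (fun t ht c hc => ?_) b
    change a • c • x = 0
    rw [← mul_smul]
    exact hx (j + t) (by omega) _ (SetLike.mul_mem_graded ha hc)

theorem mem_annihilatorGE {n : ℤ} {x : Q} :
    x ∈ annihilatorGE 𝒜 hpos n ↔ ∀ j : ℤ, n ≤ j → ∀ a ∈ 𝒜 j, a • x = 0 :=
  Iff.rfl

theorem annihilatorGE_mono : Monotone (annihilatorGE 𝒜 hpos (Q := Q)) :=
  fun _ _ hnm _ hx j hj => hx j (hnm.trans hj)

theorem annihilatorGE_of_nonpos {n : ℤ} (hn : n ≤ 0) : annihilatorGE 𝒜 hpos (Q := Q) n = ⊥ :=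
  eq_bot_iff.2 fun x hx => by
    simpa using hx 0 hn 1 (SetLike.one_mem_graded 𝒜)

theorem smul_mem_annihilatorGE {r s : ℤ} {b : A} (hb : b ∈ 𝒜 r) {x : Q}
    (hx : x ∈ annihilatorGE 𝒜 hpos (r + s)) : b • x ∈ annihilatorGE 𝒜 hpos s := by
  intro j hj a ha
  rw [← mul_smul]
  exact hx (j + r) (by omega) _ (SetLike.mul_mem_graded ha hb)

theorem exists_annihilatorGE_eq_top [FiniteDimensional k A] :
    ∃ n, annihilatorGE 𝒜 hpos (Q := Q) n = ⊤ := by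
  obtain ⟨D, hD⟩ := (Submodule.finite_ne_bot_of_iSupIndep
    (Decomposition.isInternal 𝒜).submodule_iSupIndep).bddAbove
  refine ⟨D + 1, eq_top_iff.2 fun x _ j hj a ha => ?_⟩
  have hAj : 𝒜 j = ⊥ := by
    by_contra h
    have := hD h
    omega
  rw [hAj, Submodule.mem_bot] at ha
  rw [ha, zero_smul]

/-- `e` is the largest degree with `A_e y ≠ 0`. -/
theorem exists_smul_ne_zero_mem_annihilatorGE_one {n : ℤ} {y : Q}
    (hy : y ∈ annihilatorGE 𝒜 hpos n) (hy0 : y ≠ 0) :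
    ∃ e, 0 ≤ e ∧ e < n ∧ ∃ a ∈ 𝒜 e, a • y ≠ 0 ∧ a • y ∈ annihilatorGE 𝒜 hpos 1 := by
  have hn : 0 ≤ n := by
    by_contra! hn
    rw [annihilatorGE_of_nonpos 𝒜 hpos hn.le, Submodule.mem_bot] at hy
    exact hy0 hy
  induction n, hn using Int.leInduction with
  | base =>
    rw [annihilatorGE_of_nonpos 𝒜 hpos le_rfl, Submodule.mem_bot] at hy
    exact absurd hy hy0
  | succ n hn ih =>
    by_cases hyn : y ∈ annihilatorGE 𝒜 hpos n
    · obtain ⟨e, he0, hen, h⟩ := ih hyn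
      exact ⟨e, he0, by omega, h⟩
    · obtain ⟨j, hj, a, ha, hay⟩ : ∃ j, n ≤ j ∧ ∃ a ∈ 𝒜 j, a • y ≠ 0 := by
        simpa [mem_annihilatorGE] using hyn
      obtain rfl : j = n := le_antisymm (by_contra fun h => hay (hy j (by omega) a ha)) hj
      exact ⟨j, hn, by omega, a, ha, hay, smul_mem_annihilatorGE 𝒜 hpos ha hy⟩

theorem annihilatorGE_one_ne_bot [FiniteDimensional k A] [Nontrivial Q] :
    annihilatorGE 𝒜 hpos (Q := Q) 1 ≠ ⊥ := by
  obtain ⟨n, hn⟩ := exists_annihilatorGE_eq_top 𝒜 hpos (Q := Q)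
  obtain ⟨y, hy⟩ := exists_ne (0 : Q)
  obtain ⟨-, -, -, a, -, hay, hayN⟩ :=
    exists_smul_ne_zero_mem_annihilatorGE_one 𝒜 hpos (hn ▸ Submodule.mem_top) hy
  intro h
  rw [h, Submodule.mem_bot] at hayN
  exact hay hayN

end Annihilator

section Socle

variable {k A : Type*} [Field k] [Ring A] [Algebra k A] (𝒜 : ℤ → Submodule k A) [GradedAlgebra 𝒜]
  {Q : Type*} [AddCommGroup Q] [Module A Q]

theorem le_socM_of_isSemisimpleModule {R M : Type*} [Ring R] [AddCommGroup M] [Module R M]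
    (N : Submodule R M) [IsSemisimpleModule R N] : N ≤ socM R M := by
  rw [← N.map_subtype_top, ← IsSemisimpleModule.sSup_simples_eq_top R N,
    (Submodule.gc_map_comap N.subtype).l_sSup]
  refine iSup₂_le fun S (hS : IsSimpleModule R S) => le_sSup ?_
  exact IsSimpleModule.congr (Submodule.equivMapOfInjective _ N.injective_subtype S).symm

theorem posPartKills_of_isSimpleModule [FiniteDimensional k A] (hpos : ∀ i : ℤ, i < 0 → 𝒜 i = ⊥)
    [IsSimpleModule A Q] : PosPartKills 𝒜 Q := by
  have : Nontrivial Q := IsSimpleModule.nontrivial A Q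
  have htop := (eq_bot_or_eq_top (annihilatorGE 𝒜 hpos (Q := Q) 1)).resolve_left
    (annihilatorGE_one_ne_bot 𝒜 hpos)
  intro j hj a ha x
  exact (htop ▸ Submodule.mem_top : x ∈ annihilatorGE 𝒜 hpos 1) j hj a ha

/-- Over `A_0` every submodule of `Q` is an `A`-submodule, so `Q` inherits semisimplicity
from the semisimple ring `A_0`. -/
theorem isSemisimpleModule_of_posPartKills (hpos : ∀ i : ℤ, i < 0 → 𝒜 i = ⊥)
    (hss : IsSemisimpleRing (𝒜 0)) (h : PosPartKills 𝒜 Q) : IsSemisimpleModule A Q := by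
  let _ : Module (𝒜 0) Q := inferInstanceAs (Module (SetLike.GradeZero.subring 𝒜) Q)
  have : IsScalarTower (𝒜 0) A Q :=
    inferInstanceAs (IsScalarTower (SetLike.GradeZero.subring 𝒜) A Q)
  have hstable (W : Submodule (𝒜 0) Q) (a : A) {y : Q} (hy : y ∈ W) : a • y ∈ W := by
    refine smul_mem_of_forall_homogeneous_smul_mem 𝒜 hpos W.toAddSubmonoid
      (fun t ht b hb => ?_) a
    rcases ht.lt_or_eq with ht | rfl
    · rw [h t ht b hb y]
      exact W.zero_mem
    · exact W.smul_mem ⟨b, hb⟩ hy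
  have hsurj : Function.Surjective (Submodule.restrictScalarsEmbedding (𝒜 0) A Q) :=
    fun W => ⟨{ W with smul_mem' := fun a _ hy => hstable W a hy }, rfl⟩
  rw [isSemisimpleModule_iff, (OrderIso.ofSurjective _ hsurj).complementedLattice_iff]
  exact (isSemisimpleModule_iff (𝒜 0) Q).1 inferInstance

theorem socM_eq_annihilatorGE_one [FiniteDimensional k A] (hpos : ∀ i : ℤ, i < 0 → 𝒜 i = ⊥)
    (hss : IsSemisimpleRing (𝒜 0)) : socM A Q = annihilatorGE 𝒜 hpos 1 := by
  apply le_antisymm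
  · refine sSup_le fun S (hS : IsSimpleModule A S) y hy j hj a ha => ?_
    simpa using congrArg Subtype.val
      (posPartKills_of_isSimpleModule 𝒜 hpos j (by omega) a ha ⟨y, hy⟩)
  · have := isSemisimpleModule_of_posPartKills 𝒜 hpos hss
      fun j hj a ha (y : annihilatorGE 𝒜 hpos (Q := Q) 1) => Subtype.ext (y.2 j hj a ha)
    exact le_socM_of_isSemisimpleModule _

end Socle

section SocleSeries

variable {k A : Type*} [Field k] [Ring A] [Algebra k A] (𝒜 : ℤ → Submodule k A) [GradedAlgebra 𝒜]
  (hpos : ∀ i : ℤ, i < 0 → 𝒜 i = ⊥) {M : Type*} [AddCommGroup M] [Module A M]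

/-- The inclusion `≤` rests on `A_t ⊆ A_{t-1} A_1`, i.e. on generation in degree one. -/
theorem comap_mkQ_annihilatorGE_one (hgen : ∀ i : ℤ, 0 ≤ i → 𝒜 (i + 1) = 𝒜 1 * 𝒜 i)
    {n : ℤ} (hn : 0 ≤ n) :
    (annihilatorGE 𝒜 hpos (Q := M ⧸ annihilatorGE 𝒜 hpos n) 1).comap
      (annihilatorGE 𝒜 hpos n).mkQ = annihilatorGE 𝒜 hpos (n + 1) := by
  ext x
  simp only [Submodule.mem_comap, mem_annihilatorGE, Submodule.mkQ_apply,
    ← Submodule.Quotient.mk_smul, Submodule.Quotient.mk_eq_zero]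
  constructor
  · intro hx t ht a ha
    have ha' : a ∈ 𝒜 (t - 1) * 𝒜 1 :=
      graded_succ_le_mul_one 𝒜 hgen (by omega) (by rwa [sub_add_cancel])
    refine Submodule.mul_induction_on ha' (fun p hp q hq => ?_) fun p q hp hq => ?_
    · rw [mul_smul]
      exact hx 1 le_rfl q hq (t - 1) (by omega) p hp
    · rw [add_smul, hp, hq, add_zero]
  · intro hx j hj b hb
    exact smul_mem_annihilatorGE 𝒜 hpos hb (annihilatorGE_mono 𝒜 hpos (by omega) hx)

theorem socSeries_eq_annihilatorGE [FiniteDimensional k A] (hss : IsSemisimpleRing (𝒜 0))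
    (hgen : ∀ i : ℤ, 0 ≤ i → 𝒜 (i + 1) = 𝒜 1 * 𝒜 i) (i : ℕ) :
    socSeries A M i = annihilatorGE 𝒜 hpos i := by
  induction i with
  | zero => exact (annihilatorGE_of_nonpos 𝒜 hpos le_rfl).symm
  | succ i ih =>
    rw [socSeries, ih, socStep, socM_eq_annihilatorGE_one 𝒜 hpos hss,
      comap_mkQ_annihilatorGE_one 𝒜 hpos hgen (by omega), Nat.cast_succ]

end SocleSeries

section GradedSMul

variable {k A M : Type*} [CommSemiring k] [Semiring A] [Algebra k A] [AddCommMonoid M]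
  [Module k M] [Module A M] (𝒜 : ℤ → Submodule k A) (ℳ : ℤ → Submodule k M)
  [SetLike.GradedSMul 𝒜 ℳ]

theorem smul_mem_graded {a : A} {j m : ℤ} (ha : a ∈ 𝒜 j) {x : M} (hx : x ∈ ℳ m) :
    a • x ∈ ℳ (j + m) :=
  SetLike.GradedSMul.smul_mem ha hx

theorem coe_decompose_smul_of_mem [Decomposition ℳ] {a : A} {j : ℤ} (ha : a ∈ 𝒜 j) (x : M)
    (m : ℤ) : (decompose ℳ (a • x) (j + m) : M) = a • (decompose ℳ x m : M) := by
  induction x using Decomposition.inductionOn ℳ with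
  | zero => simp
  | @homogeneous i x =>
    obtain ⟨x, hx⟩ := x
    by_cases hi : i = m
    · subst hi
      rw [decompose_of_mem_same ℳ (smul_mem_graded 𝒜 ℳ ha hx), decompose_of_mem_same ℳ hx]
    · rw [decompose_of_mem_ne ℳ (smul_mem_graded 𝒜 ℳ ha hx) (by omega),
        decompose_of_mem_ne ℳ hx hi, smul_zero]
  | add x y hx hy =>
    simp only [smul_add, decompose_add, DirectSum.add_apply, Submodule.coe_add, hx, hy]

end GradedSMul

section GradedModule

variable {k A M : Type*} [Field k] [Ring A] [Algebra k A] (𝒜 : ℤ → Submodule k A)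
  [GradedAlgebra 𝒜] (hpos : ∀ i : ℤ, i < 0 → 𝒜 i = ⊥)
  [AddCommGroup M] [Module k M] [Module A M]
  (ℳ : ℤ → Submodule k M) [SetLike.GradedSMul 𝒜 ℳ] [Decomposition ℳ]

theorem decompose_mem_annihilatorGE {n : ℤ} {x : M} (hx : x ∈ annihilatorGE 𝒜 hpos n) (m : ℤ) :
    (decompose ℳ x m : M) ∈ annihilatorGE 𝒜 hpos n := by
  intro j hj a ha
  rw [← coe_decompose_smul_of_mem 𝒜 ℳ ha, hx j hj a ha, decompose_zero, DirectSum.zero_apply,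
    ZeroMemClass.coe_zero]

variable [IsScalarTower k A M] {c : ℤ}

/-- If `y ≠ 0`, it has a nonzero multiple in `N_1 ⊆ M_c` of degree `m + e` with `0 ≤ e < n`. -/
theorem eq_zero_of_mem_graded_of_mem_annihilatorGE
    (hsoc : (annihilatorGE 𝒜 hpos (Q := M) 1).restrictScalars k ≤ ℳ c)
    {m n : ℤ} (hm : m ∉ Set.Ioc (c - n) c) {y : M} (hym : y ∈ ℳ m)
    (hyn : y ∈ annihilatorGE 𝒜 hpos n) : y = 0 := by
  by_contra hy0
  obtain ⟨e, he0, hen, a, ha, hay, hayN⟩ :=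
    exists_smul_ne_zero_mem_annihilatorGE_one 𝒜 hpos hyn hy0
  have hdeg : e + m = c := by
    by_contra hne
    exact hay (by rw [← decompose_of_mem_same ℳ (hsoc hayN),
      decompose_of_mem_ne ℳ (smul_mem_graded 𝒜 ℳ ha hym) hne])
  exact hm ⟨by omega, by omega⟩

theorem graded_eq_bot_of_lt [FiniteDimensional k A]
    (hsoc : (annihilatorGE 𝒜 hpos (Q := M) 1).restrictScalars k ≤ ℳ c) {t : ℤ} (ht : c < t) :
    ℳ t = ⊥ := by
  obtain ⟨n, hn⟩ := exists_annihilatorGE_eq_top 𝒜 hpos (Q := M)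
  refine eq_bot_iff.2 fun y hy => (Submodule.mem_bot k).2 ?_
  exact eq_zero_of_mem_graded_of_mem_annihilatorGE 𝒜 hpos ℳ hsoc (fun h => not_le.2 ht h.2) hy
    (hn ▸ Submodule.mem_top)

theorem restrictScalars_annihilatorGE_eq [FiniteDimensional k A]
    (hsoc : (annihilatorGE 𝒜 hpos (Q := M) 1).restrictScalars k ≤ ℳ c) (n : ℤ) :
    (annihilatorGE 𝒜 hpos n).restrictScalars k = ⨆ m : ℤ, ⨆ _ : c - n + 1 ≤ m, ℳ m := by
  classical
  apply le_antisymm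
  · intro x hx
    rw [← sum_support_decompose ℳ x]
    refine Submodule.sum_mem _ fun m _ => ?_
    by_cases hm : c - n + 1 ≤ m
    · exact Submodule.mem_iSup_of_mem m (Submodule.mem_iSup_of_mem hm (decompose ℳ x m).2)
    · rw [eq_zero_of_mem_graded_of_mem_annihilatorGE 𝒜 hpos ℳ hsoc
        (fun h => hm (Int.add_one_le_of_lt h.1)) (decompose ℳ x m).2
        (decompose_mem_annihilatorGE 𝒜 hpos ℳ hx m)]
      exact Submodule.zero_mem _
  · refine iSup₂_le fun m hm x hx j hj a ha => ?_
    have hax := smul_mem_graded 𝒜 ℳ ha hx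
    rwa [graded_eq_bot_of_lt 𝒜 hpos ℳ hsoc (by omega), Submodule.mem_bot] at hax

end GradedModule

theorem statement19_general {k A M : Type*} [Field k] [Ring A] [Algebra k A]
    (𝒜 : ℤ → Submodule k A) [GradedAlgebra 𝒜]
    [AddCommGroup M] [Module k M] [Module A M] [IsScalarTower k A M]
    (ℳ : ℤ → Submodule k M) [SetLike.GradedSMul 𝒜 ℳ] [DirectSum.Decomposition ℳ]
    [FiniteDimensional k A]
    (hpos : ∀ i : ℤ, i < 0 → 𝒜 i = ⊥)
    (hss : IsSemisimpleRing ↥(𝒜 0))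
    (hgen : ∀ i : ℤ, 0 ≤ i → 𝒜 (i + 1) = 𝒜 1 * 𝒜 i)
    (c : ℤ)
    (hsocdeg : Submodule.restrictScalars k (socM A M) ≤ ℳ c)
    (i : ℕ) :
    Submodule.restrictScalars k (socSeries A M i) =
      ⨆ m : ℤ, ⨆ _ : c - (i : ℤ) + 1 ≤ m, ℳ m := by
  rw [socM_eq_annihilatorGE_one 𝒜 hpos hss] at hsocdeg
  rw [socSeries_eq_annihilatorGE 𝒜 hpos hss hgen]
  exact restrictScalars_annihilatorGE_eq 𝒜 hpos ℳ hsocdeg i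

/-- let `A` be a finite-dimensional positively graded algebra over a field
with `A_0` semisimple and `A` generated in degree 1, and `M` a finite-dimensional graded
`A`-module with simple socle concentrated in degree `c`.  Then `soc^i M = M_{≥ c−i+1}`
for every `i ≥ 0`. -/
theorem statement19 {k A M : Type*} [Field k] [Ring A] [Algebra k A]
    (𝒜 : ℤ → Submodule k A) [GradedAlgebra 𝒜]
    [AddCommGroup M] [Module k M] [Module A M] [IsScalarTower k A M]
    (ℳ : ℤ → Submodule k M) [SetLike.GradedSMul 𝒜 ℳ] [DirectSum.Decomposition ℳ]
    [FiniteDimensional k A] [FiniteDimensional k M]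
    (hpos : ∀ i : ℤ, i < 0 → 𝒜 i = ⊥)
    (hss : IsSemisimpleRing ↥(𝒜 0))
    (hgen : ∀ i : ℤ, 0 ≤ i → 𝒜 (i + 1) = 𝒜 1 * 𝒜 i)
    (c : ℤ)
    (hsocsimple : IsSimpleModule A ↥(socM A M))
    (hsocdeg : Submodule.restrictScalars k (socM A M) ≤ ℳ c)
    (i : ℕ) :
    Submodule.restrictScalars k (socSeries A M i) =
      ⨆ m : ℤ, ⨆ _ : c - (i : ℤ) + 1 ≤ m, ℳ m :=
  statement19_general 𝒜 ℳ hpos hss hgen c hsocdeg i
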